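/- Let G=(V,E) be a graph, let K₂ be the complete graph with vertices a,b, and let P = (G ⊕ K₂, p, r) be a 3-dimensional sphere packing with generic radii. Then there exists a Möbius-equivalent sphere packing P' = (G ⊕ K₂, p', r') such that: (i) p'_v = (x_v, y_v, 0) for each v ∈ V; (ii) p'_a = (0,0,−1), p'_b = (0,0,1) and r'_a = r'_b = 1; and (iii) the restriction of r' to V is injective and the set {r'_v : v ∈ V} is algebraically independent over ℚ. -/

import Mathlib

noncomputable section

/-- A `d`-dimensional sphere packing with contact graph `G`, centres `p` and radii `r`:
the spheres have disjoint interiors and two spheres touch iff the vertices are adjacent. -/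
def IsSpherePacking {V : Type*} (d : ℕ) (G : SimpleGraph V)
    (p : V → EuclideanSpace ℝ (Fin d)) (r : V → ℝ) : Prop :=
  (∀ v, 0 < r v) ∧
  ∀ v w : V, v ≠ w →
    r v + r w ≤ dist (p v) (p w) ∧ (dist (p v) (p w) = r v + r w ↔ G.Adj v w)

/-- The radii are generic: injective and algebraically independent over `ℚ`. -/
def GenericRadii {V : Type*} (r : V → ℝ) : Prop :=
  Function.Injective r ∧ AlgebraicIndependent ℚ r

/-- The join `G ⊕ K₂` of `G` with the complete graph on two new vertices
(the two elements of `Fin 2`). -/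
def joinK2 {V : Type*} (G : SimpleGraph V) : SimpleGraph (V ⊕ Fin 2) where
  Adj x y :=
    match x, y with
    | Sum.inl u, Sum.inl v => G.Adj u v
    | Sum.inl _, Sum.inr _ => True
    | Sum.inr _, Sum.inl _ => True
    | Sum.inr i, Sum.inr j => i ≠ j
  symm := by
    constructor
    rintro (u | i) (v | j) h
    · exact h.symm
    · trivial
    · trivial
    · exact h.symm
  loopless := by
    constructor
    rintro (u | i) h
    · exact G.loopless.irrefl u h
    · exact h rfl

/-- A 3-dimensional Möbius transform with singularity `b₀`:
`φ(u) = a₀ + λ A(u − b₀) / ‖u − b₀‖^τ` with `λ ≠ 0`, `τ ∈ {0, 2}` and `A` a linear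
isometry of `ℝ³`. -/
def IsMobiusMap (φ : EuclideanSpace ℝ (Fin 3) → EuclideanSpace ℝ (Fin 3))
    (b₀ : EuclideanSpace ℝ (Fin 3)) : Prop :=
  ∃ (a₀ : EuclideanSpace ℝ (Fin 3)) (lam : ℝ)
    (A : EuclideanSpace ℝ (Fin 3) ≃ₗᵢ[ℝ] EuclideanSpace ℝ (Fin 3)) (τ : ℕ),
    lam ≠ 0 ∧ (τ = 0 ∨ τ = 2) ∧
    ∀ u, u ≠ b₀ → φ u = a₀ + (lam / ‖u - b₀‖ ^ τ) • A (u - b₀)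

/-- Two sphere packings (given by centres and radii over the same vertex set) are
Möbius-equivalent if some Möbius transform maps each sphere of the first packing onto
the corresponding sphere of the second. -/
def MobiusEquivalent {V : Type*} (p p' : V → EuclideanSpace ℝ (Fin 3))
    (r r' : V → ℝ) : Prop :=
  ∃ φ b₀, IsMobiusMap φ b₀ ∧
    ∀ v : V, b₀ ∉ Metric.sphere (p v) (r v) ∧
      φ '' Metric.sphere (p v) (r v) = Metric.sphere (p' v) (r' v)

/-! Spheres `a` and `b` touch at a point `q`, and every other sphere touches both. An inversion
whose centre `c` has powers with respect to `a` and `b` in the ratio `r_a : r_b` turns `a` and `b`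
into spheres of equal radius, which the choice of the power of the inversion makes `1`; a rigid
motion then moves them to `(0,0,∓1)`, and every other sphere, touching both, ends up with its
centre in the plane `z = 0`. For `r_a ≠ r_b` the admissible centres form a sphere through `q`; on a
circle `c(h)` of it tending to `q` as `h → ∞`, the centre is eventually outside every sphere, so the
inversion preserves the packing. The new radius of a sphere `v` is `2 (r_a + r_b)² r_v / Q_v(h)`
for a quadratic `Q_v` with real coefficients. Taking `h` transcendental over the field generated
by these coefficients, any algebraic relation between the new radii persists at `h = 0`, where the
radii are fractional linear in `r_v` over `ℚ(r_a, r_b)`; specializing further `r_a = r_b = 1`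
turns them into the `r_v` themselves, which are algebraically independent. -/

namespace MvPolynomial

variable {ι K A : Type*} [Fintype ι] [CommRing K] [CommRing A] [Algebra K A]

def clearDenoms (P : MvPolynomial ι K) (N D : ι → A) : A :=
  ∑ m ∈ P.support, algebraMap K A (P.coeff m) * ∏ i, N i ^ m i * D i ^ (P.totalDegree - m i)

theorem map_clearDenoms {L : Type*} [Field L] [Algebra K L] (φ : A →ₐ[K] L)
    (P : MvPolynomial ι K) (N D : ι → A) (hD : ∀ i, φ (D i) ≠ 0) :
    φ (P.clearDenoms N D)
      = (∏ i, φ (D i) ^ P.totalDegree) * aeval (fun i => φ (N i) / φ (D i)) P := by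
  rw [clearDenoms, map_sum, aeval_def, eval₂_eq', Finset.mul_sum]
  refine Finset.sum_congr rfl fun m hm => ?_
  rw [map_mul, AlgHom.commutes, map_prod, mul_left_comm, ← Finset.prod_mul_distrib]
  congr 1
  refine Finset.prod_congr rfl fun i _ => ?_
  have hle : m i ≤ P.totalDegree := (monomial_le_degreeOf i hm).trans (degreeOf_le_totalDegree P i)
  rw [map_mul, map_pow, map_pow, div_pow, ← pow_sub_mul_pow (φ (D i)) hle]
  field_simp [hD i]

end MvPolynomial

theorem algebraicIndependent_div_of_specialization {ι K A L L' : Type*} [Fintype ι]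
    [CommRing K] [CommRing A] [Algebra K A] [Field L] [Algebra K L] [Field L'] [Algebra K L']
    {φ : A →ₐ[K] L} {ψ : A →ₐ[K] L'} (hker : ∀ a, φ a = 0 → ψ a = 0) {N D : ι → A}
    (hD : ∀ i, ψ (D i) ≠ 0) (hψ : AlgebraicIndependent K fun i => ψ (N i) / ψ (D i)) :
    AlgebraicIndependent K fun i => φ (N i) / φ (D i) := by
  have hφD : ∀ i, φ (D i) ≠ 0 := fun i h => hD i (hker _ h)
  rw [algebraicIndependent_iff] at hψ ⊢
  intro P hP
  refine hψ P ?_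
  have hcleared := hker (P.clearDenoms N D) (by
    rw [MvPolynomial.map_clearDenoms φ P N D hφD, hP, mul_zero])
  rw [MvPolynomial.map_clearDenoms ψ P N D hD] at hcleared
  exact (mul_eq_zero.1 hcleared).resolve_left
    (Finset.prod_ne_zero_iff.2 fun i _ => pow_ne_zero _ (hD i))

open Polynomial in
theorem exists_mem_Ioo_algebraicIndependent_div_eval {ι : Type*} [Fintype ι] (N D : ι → ℝ[X])
    {y : ℝ} (hD : ∀ i, (D i).eval y ≠ 0)
    (hy : AlgebraicIndependent ℚ fun i => (N i).eval y / (D i).eval y) {a b : ℝ} (hab : a < b) :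
    ∃ x ∈ Set.Ioo a b, AlgebraicIndependent ℚ fun i => (N i).eval x / (D i).eval x := by
  let c : (ι × ℕ) ⊕ (ι × ℕ) → ℝ :=
    Sum.elim (fun j => (N j.1).coeff j.2) (fun j => (D j.1).coeff j.2)
  let S := Algebra.adjoin ℚ (Set.range c)
  have : Countable (MvPolynomial ((ι × ℕ) ⊕ (ι × ℕ)) ℚ) :=
    AddMonoidAlgebra.coeff_injective.countable
  have : Countable S := by
    rw [show S = (MvPolynomial.aeval c).range from Algebra.adjoin_range_eq_range_aeval ℚ c]
    exact (MvPolynomial.aeval c).rangeRestrict_surjective.countable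
  obtain ⟨x, hx, hxab⟩ := ((Algebraic.countable S ℝ).dense_compl ℝ).exists_between hab
  have lift : ∀ P : ℝ[X], (∀ n, P.coeff n ∈ S) → ∃ P' : S[X], ∀ z, aeval z P' = P.eval z := by
    intro P hP
    obtain ⟨P', hP'⟩ := (lifts_iff_coeff_lifts (f := algebraMap S ℝ) P).2 fun n =>
      ⟨⟨P.coeff n, hP n⟩, rfl⟩
    exact ⟨P', fun z => by rw [← eval_map_algebraMap, ← coe_mapRingHom, hP']⟩
  choose N' hN' using fun i => lift (N i) fun n => Algebra.subset_adjoin ⟨Sum.inl (i, n), rfl⟩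
  choose D' hD' using fun i => lift (D i) fun n => Algebra.subset_adjoin ⟨Sum.inr (i, n), rfl⟩
  have hinj := transcendental_iff_injective.1 hx
  refine ⟨x, hxab, ?_⟩
  have := algebraicIndependent_div_of_specialization (N := N') (D := D')
    (φ := (aeval x).restrictScalars ℚ) (ψ := (aeval y).restrictScalars ℚ)
    (fun P hP => by rw [hinj (hP.trans (map_zero _).symm), map_zero])
    (by simpa [hD'] using hD) (by simpa [hN', hD'] using hy)
  simpa [hN', hD'] using this

open Polynomial in
theorem exists_pos_algebraicIndependent_div_quadratic {ι : Type*} [Fintype ι] {N a b c : ι → ℝ}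
    (ha : ∀ i, 0 < a i) (hc : ∀ i, c i ≠ 0) (hind : AlgebraicIndependent ℚ fun i => N i / c i) :
    ∃ h : ℝ, (∀ i, 0 < a i * h ^ 2 + b i * h + c i) ∧
      AlgebraicIndependent ℚ fun i => N i / (a i * h ^ 2 + b i * h + c i) := by
  let Q : ι → ℝ[X] := fun i => C (a i) * X ^ 2 + C (b i) * X + C (c i)
  obtain ⟨T, hT⟩ : ∃ T, ∀ h ≥ T, ∀ i, 0 < (Q i).eval h := by
    refine Filter.eventually_atTop.1 (Filter.eventually_all.2 fun i => ?_)
    refine (tendsto_atTop_of_leadingCoeff_nonneg _ ?_ ?_).eventually_gt_atTop 0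
    · rw [degree_quadratic (ha i).ne']
      norm_num
    · rw [leadingCoeff_quadratic (ha i).ne']
      exact (ha i).le
  obtain ⟨h, ⟨hTh, -⟩, hh⟩ := exists_mem_Ioo_algebraicIndependent_div_eval (fun i => C (N i)) Q
    (y := 0) (by simpa [Q] using hc) (by simpa [Q] using hind) (lt_add_one T)
  exact ⟨h, fun i => by simpa [Q] using hT h hTh.le i, by simpa [Q] using hh⟩

open MvPolynomial in
theorem algebraicIndependent_fractionalLinear {V ι : Type*} [Fintype V]
    {r : V ⊕ ι → ℝ} (hr : AlgebraicIndependent ℚ r) (a b : ι) :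
    (AlgebraicIndependent ℚ fun v => 2 * (r (Sum.inr a) + r (Sum.inr b)) ^ 2 * r (Sum.inl v) /
      (4 * r (Sum.inr a) * r (Sum.inr b) * (r (Sum.inr a) + r (Sum.inr b))
        - (r (Sum.inr a) - r (Sum.inr b)) ^ 2 * r (Sum.inl v))) ∧
    ∀ v, 4 * r (Sum.inr a) * r (Sum.inr b) * (r (Sum.inr a) + r (Sum.inr b))
        - (r (Sum.inr a) - r (Sum.inr b)) ^ 2 * r (Sum.inl v) ≠ 0 := by
  let N : V → MvPolynomial (V ⊕ ι) ℚ := fun v =>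
    2 * (X (Sum.inr a) + X (Sum.inr b)) ^ 2 * X (Sum.inl v)
  let D : V → MvPolynomial (V ⊕ ι) ℚ := fun v =>
    4 * X (Sum.inr a) * X (Sum.inr b) * (X (Sum.inr a) + X (Sum.inr b))
      - (X (Sum.inr a) - X (Sum.inr b)) ^ 2 * X (Sum.inl v)
  have hrN : ∀ v, aeval r (N v) = 2 * (r (Sum.inr a) + r (Sum.inr b)) ^ 2 * r (Sum.inl v) :=
    fun v => by simp only [N, map_mul, map_add, map_pow, map_ofNat, aeval_X]
  have hrD : ∀ v, aeval r (D v)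
      = 4 * r (Sum.inr a) * r (Sum.inr b) * (r (Sum.inr a) + r (Sum.inr b))
        - (r (Sum.inr a) - r (Sum.inr b)) ^ 2 * r (Sum.inl v) := fun v => by
    simp only [D, map_sub, map_mul, map_add, map_pow, map_ofNat, aeval_X]
  -- with both radii of `a` and `b` specialized to `1`, the fraction `N / D` is the variable itself
  let ψ := aeval (R := ℚ) (Sum.elim (r ∘ Sum.inl) (1 : ι → ℝ))
  have hψN : ∀ v, ψ (N v) = 8 * r (Sum.inl v) := fun v => by
    simp only [ψ, N, map_mul, map_add, map_pow, map_ofNat, aeval_X, Sum.elim_inl, Sum.elim_inr,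
      Pi.one_apply, Function.comp_apply]
    norm_num
  have hψD : ∀ v, ψ (D v) = 8 := fun v => by
    simp only [ψ, D, map_sub, map_mul, map_add, map_pow, map_ofNat, aeval_X, Sum.elim_inr,
      Pi.one_apply]
    norm_num
  have hψND : (fun v => ψ (N v) / ψ (D v)) = r ∘ Sum.inl := by
    funext v
    rw [hψN, hψD, mul_div_cancel_left₀ _ (by norm_num)]
    rfl
  have hker : ∀ P, aeval r P = 0 → ψ P = 0 := fun P hP => by
    rw [hr (hP.trans (map_zero _).symm), map_zero]
  refine ⟨?_, fun v h => ?_⟩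
  · have := algebraicIndependent_div_of_specialization hker (N := N) (D := D)
      (fun v => by rw [hψD]; norm_num) (hψND ▸ hr.comp _ Sum.inl_injective)
    simpa only [AlgHom.coe_coe, hrN, hrD] using this
  · have := hker (D v) (by rw [hrD]; exact h)
    rw [hψD] at this
    norm_num at this

section InnerProductSpace

variable {E : Type*} [NormedAddCommGroup E] [InnerProductSpace ℝ E]

open RealInnerProductSpace

theorem exists_norm_eq_one_inner_eq_zero [FiniteDimensional ℝ E] (h : 2 ≤ Module.finrank ℝ E)
    (n : E) : ∃ m : E, ‖m‖ = 1 ∧ ⟪n, m⟫ = 0 := by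
  have hK := Submodule.finrank_add_finrank_orthogonal (ℝ ∙ n)
  have hn : Module.finrank ℝ (ℝ ∙ n) ≤ 1 := by
    simpa using finrank_span_le_card (R := ℝ) ({n} : Set E)
  obtain ⟨⟨x, hxK⟩, hx⟩ := Module.finrank_pos_iff_exists_ne_zero.1 (by omega :
    0 < Module.finrank ℝ (ℝ ∙ n)ᗮ)
  have hx0 : x ≠ 0 := fun h => hx (Subtype.ext h)
  refine ⟨‖x‖⁻¹ • x, norm_smul_inv_norm hx0, ?_⟩
  rw [real_inner_smul_right, Submodule.mem_orthogonal_singleton_iff_inner_right.1 hxK, mul_zero]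

theorem inner_eq_zero_of_dist_neg_eq_dist {z e : E} (h : dist z (-e) = dist z e) : ⟪z, e⟫ = 0 := by
  have h2 := congrArg (· ^ 2) h
  simp only [dist_eq_norm, sub_neg_eq_add, norm_add_sq_real, norm_sub_sq_real] at h2
  linarith

theorem exists_linearIsometryEquiv_sub_eq {x y e : E} (hxy : dist x y = 2) (he : ‖e‖ = 1) :
    ∃ (A : E ≃ₗᵢ[ℝ] E) (o : E), A (x - o) = -e ∧ A (y - o) = e := by
  set o : E := (2⁻¹ : ℝ) • (x + y)
  have hyo : y - o = -(x - o) := by simp only [o]; module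
  have hxo : ‖x - o‖ = ‖-e‖ := by
    rw [norm_neg, he, show x - o = (2⁻¹ : ℝ) • (x - y) by simp only [o]; module, norm_smul,
      ← dist_eq_norm, hxy]
    norm_num
  refine ⟨(ℝ ∙ (x - o - -e))ᗮ.reflection, o, Submodule.reflection_sub hxo, ?_⟩
  rw [hyo, map_neg, Submodule.reflection_sub hxo, neg_neg]

theorem exists_eq_sub_smul_and_eq_add_smul {pa pb : E} {ra rb : ℝ} (hab : 0 < ra + rb)
    (h : dist pa pb = ra + rb) : ∃ q n : E, ‖n‖ = 1 ∧ pa = q - ra • n ∧ pb = q + rb • n := by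
  set n := (ra + rb)⁻¹ • (pb - pa)
  have hn : (ra + rb) • n = pb - pa := by rw [smul_smul, mul_inv_cancel₀ hab.ne', one_smul]
  refine ⟨pa + ra • n, n, ?_, (add_sub_cancel_right _ _).symm, ?_⟩
  · rw [norm_smul, ← dist_eq_norm, dist_comm, h, norm_inv, Real.norm_of_nonneg hab.le,
      inv_mul_cancel₀ hab.ne']
  · rw [add_assoc, ← add_smul, hn, add_sub_cancel]

/-- `q + y` is the centre of a sphere of radius `ρ` touching the spheres `(q - ra • n, ra)` and
`(q + rb • n, rb)`. -/
theorem inner_eq_and_norm_sq_sub_of_tangent {y n : E} {ρ ra rb : ℝ} (hn : ‖n‖ = 1)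
    (hab : 0 < ra + rb) (ha : ‖y + ra • n‖ = ρ + ra) (hb : ‖y - rb • n‖ = ρ + rb) :
    ⟪y, n⟫ = ρ * (ra - rb) / (ra + rb) ∧ ‖y‖ ^ 2 - ρ ^ 2 = 4 * ra * rb * ρ / (ra + rb) := by
  have ha2 := congrArg (· ^ 2) ha
  have hb2 := congrArg (· ^ 2) hb
  simp only [norm_add_sq_real, norm_sub_sq_real, real_inner_smul_right, norm_smul,
    Real.norm_eq_abs, mul_pow, sq_abs, hn] at ha2 hb2
  constructor <;> rw [eq_div_iff hab.ne']
  · linear_combination (ha2 - hb2) / 2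
  · linear_combination rb * ha2 + ra * hb2

end InnerProductSpace

namespace SphereInversion

open Metric

variable {E : Type*} [NormedAddCommGroup E]

def power (c p : E) (ρ : ℝ) : ℝ := ‖p - c‖ ^ 2 - ρ ^ 2

theorem power_eq_zero_iff_mem_sphere {c p : E} {ρ : ℝ} (hρ : 0 ≤ ρ) :
    power c p ρ = 0 ↔ c ∈ sphere p ρ := by
  rw [power, mem_sphere, dist_eq_norm, norm_sub_rev, sub_eq_zero,
    pow_left_inj₀ (norm_nonneg _) hρ two_ne_zero]

variable [InnerProductSpace ℝ E]

/-- The inversion with centre `c` and power `k` (`EuclideanGeometry.inversion c R` for `k = R ^ 2`)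
maps the sphere `(p, ρ)` onto the sphere with this centre and radius `|imageRadius c k p ρ|`. -/
def imageCenter (c : E) (k : ℝ) (p : E) (ρ : ℝ) : E := c + (k / power c p ρ) • (p - c)

def imageRadius (c : E) (k : ℝ) (p : E) (ρ : ℝ) : ℝ := k * ρ / power c p ρ

theorem dist_imageCenter_sq_sub_sq (c p₁ p₂ : E) (k ρ₁ ρ₂ : ℝ) (h₁ : power c p₁ ρ₁ ≠ 0)
    (h₂ : power c p₂ ρ₂ ≠ 0) :
    dist (imageCenter c k p₁ ρ₁) (imageCenter c k p₂ ρ₂) ^ 2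
        - (imageRadius c k p₁ ρ₁ + imageRadius c k p₂ ρ₂) ^ 2
      = k ^ 2 / (power c p₁ ρ₁ * power c p₂ ρ₂) * (dist p₁ p₂ ^ 2 - (ρ₁ + ρ₂) ^ 2) := by
  have e₁ : ‖p₁ - c‖ ^ 2 = power c p₁ ρ₁ + ρ₁ ^ 2 := by rw [power]; ring
  have e₂ : ‖p₂ - c‖ ^ 2 = power c p₂ ρ₂ + ρ₂ ^ 2 := by rw [power]; ring
  have hd : dist p₁ p₂ = ‖(p₁ - c) - (p₂ - c)‖ := by rw [dist_eq_norm, sub_sub_sub_cancel_right]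
  rw [hd, dist_eq_norm, imageCenter, imageCenter, add_sub_add_left_eq_sub, norm_sub_sq_real,
    norm_sub_sq_real, real_inner_smul_left, real_inner_smul_right, norm_smul, norm_smul, mul_pow,
    mul_pow, Real.norm_eq_abs, Real.norm_eq_abs, sq_abs, sq_abs, e₁, e₂, imageRadius, imageRadius]
  field_simp
  ring

theorem power_imageCenter (c p : E) (k ρ : ℝ) (h : power c p ρ ≠ 0) :
    power c (imageCenter c k p ρ) (imageRadius c k p ρ) = k ^ 2 / power c p ρ := by
  have e : ‖p - c‖ ^ 2 = power c p ρ + ρ ^ 2 := by rw [power]; ring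
  rw [power, imageCenter, imageRadius, add_sub_cancel_left, norm_smul, mul_pow, Real.norm_eq_abs,
    sq_abs, e]
  field_simp
  ring

theorem inversion_eq_imageCenter (c : E) (R : ℝ) (x : E) :
    EuclideanGeometry.inversion c R x = imageCenter c (R ^ 2) x 0 := by
  rw [EuclideanGeometry.inversion, imageCenter, power, vsub_eq_sub, vadd_eq_add, add_comm, div_pow,
    dist_eq_norm]
  norm_num

theorem image_inversion_sphere {c p : E} {R ρ : ℝ} (hR : R ≠ 0) (hρ : 0 ≤ ρ)
    (hc : c ∉ sphere p ρ) :
    EuclideanGeometry.inversion c R '' sphere p ρ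
      = sphere (imageCenter c (R ^ 2) p ρ) |imageRadius c (R ^ 2) p ρ| := by
  have hpow : power c p ρ ≠ 0 := fun h => hc ((power_eq_zero_iff_mem_sphere hρ).1 h)
  rw [(EuclideanGeometry.inversion_involutive c hR).image_eq_preimage_symm]
  ext y
  rw [Set.mem_preimage, mem_sphere, mem_sphere]
  rcases eq_or_ne y c with hyc | hy
  · rw [hyc, EuclideanGeometry.inversion_self]
    refine iff_of_false (fun h => hc (mem_sphere.2 h)) fun h => ?_
    have h' := (power_eq_zero_iff_mem_sphere (abs_nonneg (imageRadius c (R ^ 2) p ρ))).2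
      (mem_sphere.2 h)
    rw [power, sq_abs, ← power, power_imageCenter c p _ ρ hpow] at h'
    exact div_ne_zero (pow_ne_zero 2 (pow_ne_zero 2 hR)) hpow h'
  · set x := EuclideanGeometry.inversion c R y
    have hx : power c x 0 ≠ 0 := by
      rw [power, zero_pow two_ne_zero, sub_zero, pow_ne_zero_iff two_ne_zero, norm_ne_zero_iff,
        sub_ne_zero]
      exact (EuclideanGeometry.inversion_eq_center hR).not.2 hy
    -- the point `x` is the sphere `(x, 0)`
    have key := dist_imageCenter_sq_sub_sq c x p (R ^ 2) 0 ρ hx hpow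
    rw [← inversion_eq_imageCenter, EuclideanGeometry.inversion_inversion c hR, imageRadius,
      mul_zero, zero_div, zero_add, zero_add, ← sq_abs (imageRadius _ _ _ _)] at key
    rw [← sq_eq_sq₀ dist_nonneg hρ, ← sq_eq_sq₀ dist_nonneg (abs_nonneg _), ← sub_eq_zero,
      ← sub_eq_zero (a := dist y _ ^ 2), key, mul_eq_zero,
      or_iff_right (div_ne_zero (by positivity) (mul_ne_zero hx hpow))]

open RealInnerProductSpace

theorem power_add_smul (q u y : E) (σ ρ : ℝ) :
    power (q + σ • u) (q + y) ρ = ‖y‖ ^ 2 - ρ ^ 2 - 2 * σ * ⟪y, u⟫ + σ ^ 2 * ‖u‖ ^ 2 := by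
  rw [power, add_sub_add_left_eq_sub, norm_sub_sq_real, real_inner_smul_right, norm_smul,
    mul_pow, Real.norm_eq_abs, sq_abs]
  ring

/-- For `ra ≠ rb`, as `h` varies these points sweep out (minus `q`) a circle on the sphere of
points whose powers with respect to the spheres `(q - ra • n, ra)` and `(q + rb • n, rb)` are in
the ratio `ra : rb`. -/
def apollonianCenter (q n m : E) (ra rb h : ℝ) : E :=
  q + (4 * ra * rb / ((ra - rb) * (1 + h ^ 2))) • (n + h • m)

variable {q n m : E}

theorem power_apollonianCenter (hn : ‖n‖ = 1) (hm : ‖m‖ = 1) (hnm : ⟪n, m⟫ = 0) (ra rb h : ℝ)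
    (y : E) (ρ : ℝ) :
    power (apollonianCenter q n m ra rb h) (q + y) ρ
      = ‖y‖ ^ 2 - ρ ^ 2 - 2 * (4 * ra * rb / ((ra - rb) * (1 + h ^ 2))) * (⟪y, n⟫ + h * ⟪y, m⟫)
        + (4 * ra * rb / ((ra - rb) * (1 + h ^ 2))) ^ 2 * (1 + h ^ 2) := by
  have hu : ‖n + h • m‖ ^ 2 = 1 + h ^ 2 := by
    rw [norm_add_sq_real, real_inner_smul_right, hnm, norm_smul, mul_pow, Real.norm_eq_abs,
      sq_abs, hn, hm]
    ring
  rw [apollonianCenter, power_add_smul, hu, inner_add_right, real_inner_smul_right]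

theorem power_apollonianCenter_sub (hn : ‖n‖ = 1) (hm : ‖m‖ = 1) (hnm : ⟪n, m⟫ = 0) {ra rb : ℝ}
    (hne : ra ≠ rb) (h : ℝ) :
    power (apollonianCenter q n m ra rb h) (q - ra • n) ra
      = 8 * ra * rb * (ra + rb) / ((ra - rb) ^ 2 * (1 + h ^ 2)) * ra := by
  have : ra - rb ≠ 0 := sub_ne_zero.2 hne
  rw [sub_eq_add_neg, power_apollonianCenter hn hm hnm, norm_neg, norm_smul, inner_neg_left,
    inner_neg_left, real_inner_smul_left, real_inner_smul_left, real_inner_self_eq_norm_sq, hnm,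
    hn, Real.norm_eq_abs, mul_one, sq_abs]
  field_simp
  ring

theorem power_apollonianCenter_add (hn : ‖n‖ = 1) (hm : ‖m‖ = 1) (hnm : ⟪n, m⟫ = 0) {ra rb : ℝ}
    (hne : ra ≠ rb) (h : ℝ) :
    power (apollonianCenter q n m ra rb h) (q + rb • n) rb
      = 8 * ra * rb * (ra + rb) / ((ra - rb) ^ 2 * (1 + h ^ 2)) * rb := by
  have : ra - rb ≠ 0 := sub_ne_zero.2 hne
  rw [power_apollonianCenter hn hm hnm, norm_smul, real_inner_smul_left, real_inner_smul_left,
    real_inner_self_eq_norm_sq, hnm, hn, Real.norm_eq_abs, mul_one, sq_abs]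
  field_simp
  ring

theorem power_apollonianCenter_of_tangent (hn : ‖n‖ = 1) (hm : ‖m‖ = 1) (hnm : ⟪n, m⟫ = 0)
    {ra rb : ℝ} (hne : ra ≠ rb) (hab : 0 < ra + rb) (h : ℝ) {y : E} {ρ : ℝ}
    (hy₁ : ⟪y, n⟫ = ρ * (ra - rb) / (ra + rb))
    (hy₂ : ‖y‖ ^ 2 - ρ ^ 2 = 4 * ra * rb * ρ / (ra + rb)) :
    power (apollonianCenter q n m ra rb h) (q + y) ρ
      = 4 * ra * rb / ((ra - rb) ^ 2 * (ra + rb) * (1 + h ^ 2)) *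
        ((ra - rb) ^ 2 * ρ * h ^ 2 + -2 * (ra ^ 2 - rb ^ 2) * ⟪y, m⟫ * h
          + (4 * ra * rb * (ra + rb) - (ra - rb) ^ 2 * ρ)) := by
  have : ra - rb ≠ 0 := sub_ne_zero.2 hne
  rw [power_apollonianCenter hn hm hnm, hy₂, hy₁]
  field_simp
  ring

end SphereInversion

namespace IsSpherePacking

variable {d : ℕ} {W : Type*} {G : SimpleGraph W} {p : W → EuclideanSpace ℝ (Fin d)} {r : W → ℝ}

theorem dist_eq_of_adj (hP : IsSpherePacking d G p r) {x y : W} (h : G.Adj x y) :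
    dist (p x) (p y) = r x + r y :=
  ((hP.2 x y h.ne).2).2 h

theorem comp_isometry (hP : IsSpherePacking d G p r)
    {f : EuclideanSpace ℝ (Fin d) → EuclideanSpace ℝ (Fin d)} (hf : Isometry f) :
    IsSpherePacking d G (f ∘ p) r := by
  refine ⟨hP.1, fun x y hxy => ?_⟩
  simpa only [Function.comp_apply, hf.dist_eq] using hP.2 x y hxy

open SphereInversion in
theorem inversion (hP : IsSpherePacking d G p r) {c : EuclideanSpace ℝ (Fin d)} {k : ℝ}
    (hk : 0 < k) (hpow : ∀ x, 0 < power c (p x) (r x)) :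
    IsSpherePacking d G (fun x => imageCenter c k (p x) (r x))
      (fun x => imageRadius c k (p x) (r x)) := by
  have hr' : ∀ x, 0 < imageRadius c k (p x) (r x) := fun x =>
    div_pos (mul_pos hk (hP.1 x)) (hpow x)
  refine ⟨hr', fun x y hxy => ?_⟩
  have key := dist_imageCenter_sq_sub_sq c (p x) (p y) k (r x) (r y) (hpow x).ne' (hpow y).ne'
  have ht : 0 < k ^ 2 / (power c (p x) (r x) * power c (p y) (r y)) := by
    have := hpow x; have := hpow y; positivity
  have hs := add_pos (hr' x) (hr' y)
  have hs' := add_pos (hP.1 x) (hP.1 y)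
  obtain ⟨hle, hiff⟩ := hP.2 x y hxy
  dsimp only
  constructor
  · rw [← sq_le_sq₀ hs.le dist_nonneg, ← sub_nonneg, key]
    exact mul_nonneg ht.le (sub_nonneg.2 ((sq_le_sq₀ hs'.le dist_nonneg).2 hle))
  · rw [← hiff, ← sq_eq_sq₀ dist_nonneg hs.le, ← sq_eq_sq₀ dist_nonneg hs'.le, ← sub_eq_zero, key,
      mul_eq_zero, or_iff_right ht.ne', sub_eq_zero]

open RealInnerProductSpace in
theorem exists_tangentPoint {V : Type*} {G : SimpleGraph V}
    {p : V ⊕ Fin 2 → EuclideanSpace ℝ (Fin d)} {r : V ⊕ Fin 2 → ℝ}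
    (hP : IsSpherePacking d (joinK2 G) p r) {ia ib : Fin 2} (hne : ia ≠ ib) :
    ∃ q n, ‖n‖ = 1 ∧ p (Sum.inr ia) = q - r (Sum.inr ia) • n ∧
      p (Sum.inr ib) = q + r (Sum.inr ib) • n ∧
      ∀ v, ⟪p (Sum.inl v) - q, n⟫
          = r (Sum.inl v) * (r (Sum.inr ia) - r (Sum.inr ib)) / (r (Sum.inr ia) + r (Sum.inr ib)) ∧
        ‖p (Sum.inl v) - q‖ ^ 2 - r (Sum.inl v) ^ 2
          = 4 * r (Sum.inr ia) * r (Sum.inr ib) * r (Sum.inl v)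
            / (r (Sum.inr ia) + r (Sum.inr ib)) := by
  have hab : 0 < r (Sum.inr ia) + r (Sum.inr ib) := add_pos (hP.1 _) (hP.1 _)
  obtain ⟨q, n, hn, hpa, hpb⟩ := exists_eq_sub_smul_and_eq_add_smul hab
    (hP.dist_eq_of_adj (show (joinK2 G).Adj (Sum.inr ia) (Sum.inr ib) from hne))
  refine ⟨q, n, hn, hpa, hpb, fun v => inner_eq_and_norm_sq_sub_of_tangent hn hab ?_ ?_⟩
  · rw [show p (Sum.inl v) - q + r (Sum.inr ia) • n = p (Sum.inl v) - p (Sum.inr ia) by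
      rw [hpa]; abel, ← dist_eq_norm]
    exact hP.dist_eq_of_adj (show (joinK2 G).Adj (Sum.inl v) (Sum.inr ia) from trivial)
  · rw [show p (Sum.inl v) - q - r (Sum.inr ib) • n = p (Sum.inl v) - p (Sum.inr ib) by
      rw [hpb]; abel, ← dist_eq_norm]
    exact hP.dist_eq_of_adj (show (joinK2 G).Adj (Sum.inl v) (Sum.inr ib) from trivial)

end IsSpherePacking

open SphereInversion in
theorem mobiusEquivalent_inversion {W : Type*} {p : W → EuclideanSpace ℝ (Fin 3)} {r : W → ℝ}
    (hr : ∀ x, 0 ≤ r x) {c : EuclideanSpace ℝ (Fin 3)} {R : ℝ} (hR : R ≠ 0)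
    (hpow : ∀ x, 0 < power c (p x) (r x))
    (A : EuclideanSpace ℝ (Fin 3) ≃ₗᵢ[ℝ] EuclideanSpace ℝ (Fin 3)) (o : EuclideanSpace ℝ (Fin 3)) :
    MobiusEquivalent p (fun x => A (imageCenter c (R ^ 2) (p x) (r x) - o)) r
      (fun x => imageRadius c (R ^ 2) (p x) (r x)) := by
  let e := (IsometryEquiv.subRight o).trans A.toIsometryEquiv
  have hc : ∀ x, c ∉ Metric.sphere (p x) (r x) := fun x h =>
    (hpow x).ne' ((power_eq_zero_iff_mem_sphere (hr x)).2 h)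
  refine ⟨e ∘ EuclideanGeometry.inversion c R, c,
    ⟨A (c - o), R ^ 2, A, 2, pow_ne_zero 2 hR, Or.inr rfl, fun u _ => ?_⟩, fun x => ⟨hc x, ?_⟩⟩
  · show A (EuclideanGeometry.inversion c R u - o) = A (c - o) + (R ^ 2 / ‖u - c‖ ^ 2) • A (u - c)
    rw [← map_smul, ← map_add, EuclideanGeometry.inversion, vsub_eq_sub, vadd_eq_add, div_pow,
      dist_eq_norm]
    congr 1
    abel
  · rw [Set.image_comp, image_inversion_sphere hR (hr x) (hc x), IsometryEquiv.image_sphere,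
      abs_of_nonneg (show 0 ≤ imageRadius c (R ^ 2) (p x) (r x) from
        div_nonneg (mul_nonneg (sq_nonneg R) (hr x)) (hpow x).le)]
    rfl

open SphereInversion RealInnerProductSpace in
theorem exists_normalizing_inversion {d : ℕ} (hd : 2 ≤ d) {V : Type*} [Fintype V]
    {G : SimpleGraph V} {p : V ⊕ Fin 2 → EuclideanSpace ℝ (Fin d)} {r : V ⊕ Fin 2 → ℝ}
    (hP : IsSpherePacking d (joinK2 G) p r) (hr : AlgebraicIndependent ℚ r) {ia ib : Fin 2}
    (hne : ia ≠ ib) (hlt : r (Sum.inr ib) < r (Sum.inr ia)) :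
    ∃ c k, 0 < k ∧ (∀ x, 0 < power c (p x) (r x)) ∧
      imageRadius c k (p (Sum.inr ia)) (r (Sum.inr ia)) = 1 ∧
      imageRadius c k (p (Sum.inr ib)) (r (Sum.inr ib)) = 1 ∧
      AlgebraicIndependent ℚ fun v => imageRadius c k (p (Sum.inl v)) (r (Sum.inl v)) := by
  set ra := r (Sum.inr ia)
  set rb := r (Sum.inr ib)
  have hra : 0 < ra := hP.1 _
  have hrb : 0 < rb := hP.1 _
  have hrab : ra - rb ≠ 0 := sub_ne_zero.2 hlt.ne'
  obtain ⟨q, n, hn, hpa, hpb, htan⟩ := hP.exists_tangentPoint hne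
  obtain ⟨m, hm, hnm⟩ := exists_norm_eq_one_inner_eq_zero (by simpa using hd) n
  obtain ⟨hind₀, hγ⟩ := algebraicIndependent_fractionalLinear hr ia ib
  obtain ⟨h, hQ, hind⟩ := exists_pos_algebraicIndependent_div_quadratic
    (a := fun v => (ra - rb) ^ 2 * r (Sum.inl v))
    (b := fun v => -2 * (ra ^ 2 - rb ^ 2) * ⟪p (Sum.inl v) - q, m⟫)
    (fun v => by have := hP.1 (Sum.inl v); positivity) hγ hind₀
  set k := 8 * ra * rb * (ra + rb) / ((ra - rb) ^ 2 * (1 + h ^ 2)) with hk_def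
  have hk : 0 < k := by positivity
  have hpowa : power (apollonianCenter q n m ra rb h) (p (Sum.inr ia)) ra = k * ra := by
    rw [hpa]; exact power_apollonianCenter_sub hn hm hnm hlt.ne' h
  have hpowb : power (apollonianCenter q n m ra rb h) (p (Sum.inr ib)) rb = k * rb := by
    rw [hpb]; exact power_apollonianCenter_add hn hm hnm hlt.ne' h
  have hpowv : ∀ v, power (apollonianCenter q n m ra rb h) (p (Sum.inl v)) (r (Sum.inl v))
      = 4 * ra * rb / ((ra - rb) ^ 2 * (ra + rb) * (1 + h ^ 2)) *
        ((ra - rb) ^ 2 * r (Sum.inl v) * h ^ 2 + -2 * (ra ^ 2 - rb ^ 2) * ⟪p (Sum.inl v) - q, m⟫ * h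
          + (4 * ra * rb * (ra + rb) - (ra - rb) ^ 2 * r (Sum.inl v))) := fun v => by
    simpa only [add_sub_cancel] using power_apollonianCenter_of_tangent (q := q) hn hm hnm
      hlt.ne' (add_pos hra hrb) h (htan v).1 (htan v).2
  refine ⟨apollonianCenter q n m ra rb h, k, hk, ?_, ?_, ?_, ?_⟩
  · rintro (v | i)
    · rw [hpowv]
      have := hQ v
      positivity
    · obtain rfl | rfl : i = ia ∨ i = ib := by have := Fin.val_ne_of_ne hne; omega
      · rw [hpowa]; positivity
      · rw [hpowb]; positivity
  · rw [imageRadius, hpowa, div_self (by positivity)]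
  · rw [imageRadius, hpowb, div_self (by positivity)]
  · convert hind using 2 with v
    have := hQ v
    rw [imageRadius, hpowv, hk_def]
    field_simp
    ring

open SphereInversion RealInnerProductSpace in
theorem exists_standard_form_of_lt {V : Type*} [Fintype V] (G : SimpleGraph V)
    {p : V ⊕ Fin 2 → EuclideanSpace ℝ (Fin 3)} {r : V ⊕ Fin 2 → ℝ}
    (hP : IsSpherePacking 3 (joinK2 G) p r) (hr : AlgebraicIndependent ℚ r) {ia ib : Fin 2}
    (hne : ia ≠ ib) (hlt : r (Sum.inr ib) < r (Sum.inr ia)) {e : EuclideanSpace ℝ (Fin 3)}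
    (he : ‖e‖ = 1) :
    ∃ (p' : V ⊕ Fin 2 → EuclideanSpace ℝ (Fin 3)) (r' : V ⊕ Fin 2 → ℝ),
      IsSpherePacking 3 (joinK2 G) p' r' ∧ MobiusEquivalent p p' r r' ∧
      (∀ v, ⟪p' (Sum.inl v), e⟫ = 0) ∧ p' (Sum.inr ia) = -e ∧ p' (Sum.inr ib) = e ∧
      r' (Sum.inr ia) = 1 ∧ r' (Sum.inr ib) = 1 ∧
      AlgebraicIndependent ℚ fun v => r' (Sum.inl v) := by
  obtain ⟨c, k, hk, hpow, ha, hb, hind⟩ :=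
    exists_normalizing_inversion (by norm_num) hP hr hne hlt
  have hP₁ := hP.inversion hk hpow
  set p₁ := fun x => imageCenter c k (p x) (r x)
  set r₁ := fun x => imageRadius c k (p x) (r x)
  have hdist : dist (p₁ (Sum.inr ia)) (p₁ (Sum.inr ib)) = 2 := by
    rw [hP₁.dist_eq_of_adj (show (joinK2 G).Adj (Sum.inr ia) (Sum.inr ib) from hne)]
    simp only [r₁, ha, hb]
    norm_num
  obtain ⟨A, o, hAa, hAb⟩ := exists_linearIsometryEquiv_sub_eq hdist he
  let e' := (IsometryEquiv.subRight o).trans A.toIsometryEquiv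
  have hP' : IsSpherePacking 3 (joinK2 G) (e' ∘ p₁) r₁ := hP₁.comp_isometry e'.isometry
  refine ⟨e' ∘ p₁, r₁, hP', ?_, fun v => ?_, hAa, hAb, ha, hb, hind⟩
  · have hmob :=
      mobiusEquivalent_inversion (fun x => (hP.1 x).le) (Real.sqrt_ne_zero'.2 hk) hpow A o
    rwa [Real.sq_sqrt hk.le] at hmob
  · have hva : dist ((e' ∘ p₁) (Sum.inl v)) (-e) = r₁ (Sum.inl v) + 1 := by
      rw [← hAa, ← ha]
      exact hP'.dist_eq_of_adj (show (joinK2 G).Adj (Sum.inl v) (Sum.inr ia) from trivial)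
    have hvb : dist ((e' ∘ p₁) (Sum.inl v)) e = r₁ (Sum.inl v) + 1 := by
      rw [← hAb, ← hb]
      exact hP'.dist_eq_of_adj (show (joinK2 G).Adj (Sum.inl v) (Sum.inr ib) from trivial)
    exact inner_eq_zero_of_dist_neg_eq_dist (hva.trans hvb.symm)

open RealInnerProductSpace in
theorem exists_standard_form {V : Type*} [Fintype V] (G : SimpleGraph V)
    {p : V ⊕ Fin 2 → EuclideanSpace ℝ (Fin 3)} {r : V ⊕ Fin 2 → ℝ}
    (hP : IsSpherePacking 3 (joinK2 G) p r) (hr : AlgebraicIndependent ℚ r)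
    (hne : r (Sum.inr 0) ≠ r (Sum.inr 1)) {e : EuclideanSpace ℝ (Fin 3)} (he : ‖e‖ = 1) :
    ∃ (p' : V ⊕ Fin 2 → EuclideanSpace ℝ (Fin 3)) (r' : V ⊕ Fin 2 → ℝ),
      IsSpherePacking 3 (joinK2 G) p' r' ∧ MobiusEquivalent p p' r r' ∧
      (∀ v, ⟪p' (Sum.inl v), e⟫ = 0) ∧ p' (Sum.inr 0) = -e ∧ p' (Sum.inr 1) = e ∧
      r' (Sum.inr 0) = 1 ∧ r' (Sum.inr 1) = 1 ∧
      AlgebraicIndependent ℚ fun v => r' (Sum.inl v) := by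
  rcases hne.lt_or_gt with hlt | hlt
  · obtain ⟨p', r', hP', hmob, hperp, h1, h0, hr1, hr0, hind⟩ :=
      exists_standard_form_of_lt G hP hr one_ne_zero hlt (e := -e) (by rwa [norm_neg])
    refine ⟨p', r', hP', hmob, fun v => ?_, h0, by rw [h1, neg_neg], hr0, hr1, hind⟩
    rw [← neg_eq_zero, ← inner_neg_right, hperp]
  · exact exists_standard_form_of_lt G hP hr zero_ne_one hlt he

/-- Any generic-radii sphere packing with contact graph `G ⊕ K₂` is Möbius-equivalent to
a standard form: the spheres of `K₂` are unit spheres centred at `(0,0,∓1)`, the other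
centres lie in the `xy`-plane, and the remaining radii are injective and algebraically
independent over `ℚ`. -/
theorem mobius_equiv_standard_form {V : Type*} [Fintype V] (G : SimpleGraph V)
    (p : V ⊕ Fin 2 → EuclideanSpace ℝ (Fin 3)) (r : V ⊕ Fin 2 → ℝ)
    (hP : IsSpherePacking 3 (joinK2 G) p r) (hr : GenericRadii r) :
    ∃ (p' : V ⊕ Fin 2 → EuclideanSpace ℝ (Fin 3)) (r' : V ⊕ Fin 2 → ℝ),
      IsSpherePacking 3 (joinK2 G) p' r' ∧ MobiusEquivalent p p' r r' ∧
      (∀ v : V, p' (Sum.inl v) 2 = 0) ∧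
      p' (Sum.inr 0) 0 = 0 ∧ p' (Sum.inr 0) 1 = 0 ∧ p' (Sum.inr 0) 2 = -1 ∧
      p' (Sum.inr 1) 0 = 0 ∧ p' (Sum.inr 1) 1 = 0 ∧ p' (Sum.inr 1) 2 = 1 ∧
      r' (Sum.inr 0) = 1 ∧ r' (Sum.inr 1) = 1 ∧
      Function.Injective (fun v : V => r' (Sum.inl v)) ∧
      AlgebraicIndependent ℚ (fun v : V => r' (Sum.inl v)) := by
  obtain ⟨hinj, hind⟩ := hr
  obtain ⟨p', r', hP', hmob, hperp, h0, h1, hr0, hr1, hind'⟩ :=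
    exists_standard_form G hP hind (hinj.ne (by simp)) (e := EuclideanSpace.single 2 1)
      (by simp)
  refine ⟨p', r', hP', hmob, fun v => ?_, ?_, ?_, ?_, ?_, ?_, ?_, hr0, hr1, hind'.injective, hind'⟩
  · simpa [EuclideanSpace.inner_single_right] using hperp v
  all_goals simp [h0, h1]

end
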